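/- arXiv:math/0209021 — 5 statements merged into one kernel-verified Lean document; each statement's English description precedes it below -/
import Mathlib

section
/- Let Ω be a metric space and ν a probability measure on Ω such that ν(Bᵉ) ≤ ν(B) + φ(ε) for all ε > 0, all sets B that are closed balls or complements of closed balls, where φ is a right-continuous function and Bᵉ = {x : dist(x,B) ≤ ε}. Then for any probability measure μ with Prokhorov distance d_P(μ,ν) = x, the discrepancy satisfies d_D(μ,ν) ≤ x + φ(x). -/
open MeasureTheory Set Metric

/-- If `ν(Bᵉ) ≤ ν(B) + φ(ε)` for all closed balls and complements of closed balls `B`,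
with `φ` right-continuous, and the Prokhorov distance between `μ` and `ν` equals `x`,
then the discrepancy satisfies `d_D(μ,ν) ≤ x + φ(x)`. -/
theorem discrepancy_le_prokhorov (Ω : Type*) [MetricSpace Ω]
    [MeasurableSpace Ω] [BorelSpace Ω]
    (μ ν : Measure Ω) [IsProbabilityMeasure μ] [IsProbabilityMeasure ν]
    (φ : ℝ → ℝ) (hφ : ∀ x, ContinuousWithinAt φ (Ici x) x)
    (hν : ∀ ε > (0 : ℝ), ∀ B : Set Ω,
      (∃ c r, B = closedBall c r ∨ B = (closedBall c r)ᶜ) →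
      (ν (cthickening ε B)).toReal ≤ (ν B).toReal + φ ε)
    (x : ℝ)
    (hx : sInf {ε : ℝ | 0 < ε ∧ ∀ B : Set Ω, MeasurableSet B →
        (μ B).toReal ≤ (ν (cthickening ε B)).toReal + ε} = x) :
    sSup {t : ℝ | ∃ c r, t = |(μ (closedBall c r)).toReal - (ν (closedBall c r)).toReal|}
      ≤ x + φ x := by
  set S := {ε : ℝ | 0 < ε ∧ ∀ B : Set Ω, MeasurableSet B →
      (μ B).toReal ≤ (ν (cthickening ε B)).toReal + ε} with hSdef
  have hΩ : Nonempty Ω := by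
    by_contra h
    rw [not_nonempty_iff] at h
    have h1 : (μ univ) = 1 := measure_univ
    simp [Set.univ_eq_empty_iff.mpr h] at h1
  have hSne : S.Nonempty := by
    refine ⟨1, one_pos, fun B hB => ?_⟩
    have h1 : (μ B).toReal ≤ 1 := by
      have := ENNReal.toReal_mono ENNReal.one_ne_top (prob_le_one (μ := μ) (s := B))
      simpa using this
    have h2 : (0:ℝ) ≤ (ν (cthickening 1 B)).toReal := ENNReal.toReal_nonneg
    linarith
  have hSbdd : BddBelow S := ⟨0, fun ε hε => hε.1.le⟩
  -- key estimate for each ε ∈ S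
  have key : ∀ ε ∈ S, ∀ c : Ω, ∀ r : ℝ,
      |(μ (closedBall c r)).toReal - (ν (closedBall c r)).toReal| ≤ ε + φ ε := by
    intro ε hε c r
    obtain ⟨hεpos, hεS⟩ := hε
    set B := closedBall c r with hB
    have h1 : (μ B).toReal ≤ (ν (cthickening ε B)).toReal + ε :=
      hεS B measurableSet_closedBall
    have h2 : (ν (cthickening ε B)).toReal ≤ (ν B).toReal + φ ε :=
      hν ε hεpos B ⟨c, r, Or.inl rfl⟩
    have h3 : (μ Bᶜ).toReal ≤ (ν (cthickening ε Bᶜ)).toReal + ε :=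
      hεS Bᶜ measurableSet_closedBall.compl
    have h4 : (ν (cthickening ε Bᶜ)).toReal ≤ (ν Bᶜ).toReal + φ ε :=
      hν ε hεpos Bᶜ ⟨c, r, Or.inr rfl⟩
    have hμc : (μ Bᶜ).toReal = 1 - (μ B).toReal := by
      rw [prob_compl_eq_one_sub measurableSet_closedBall,
        ENNReal.toReal_sub_of_le prob_le_one ENNReal.one_ne_top, ENNReal.toReal_one]
    have hνc : (ν Bᶜ).toReal = 1 - (ν B).toReal := by
      rw [prob_compl_eq_one_sub measurableSet_closedBall,
        ENNReal.toReal_sub_of_le prob_le_one ENNReal.one_ne_top, ENNReal.toReal_one]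
    rw [abs_sub_le_iff]
    constructor <;> linarith
  -- bound for each ball
  have hbound : ∀ c : Ω, ∀ r : ℝ,
      |(μ (closedBall c r)).toReal - (ν (closedBall c r)).toReal| ≤ x + φ x := by
    intro c r
    refine le_of_forall_pos_le_add fun δ hδ => ?_
    obtain ⟨η, hη, hηcont⟩ := Metric.continuousWithinAt_iff.mp (hφ x) (δ/2) (by linarith)
    obtain ⟨ε, hεS, hεlt⟩ := Real.lt_sInf_add_pos hSne
      (ε := min η (δ/2)) (lt_min hη (by linarith))
    rw [hx] at hεlt
    have hεx : x ≤ ε := hx ▸ csInf_le hSbdd hεS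
    have hεη : dist ε x < η := by
      rw [Real.dist_eq, abs_of_nonneg (by linarith)]
      have := min_le_left η (δ/2); linarith
    have hφε : |φ ε - φ x| < δ/2 := by
      have := hηcont hεx hεη
      rwa [Real.dist_eq] at this
    have h1 := key ε hεS c r
    have h2 : ε ≤ x + δ/2 := by
      have := min_le_right η (δ/2); linarith
    have h3 : φ ε ≤ φ x + δ/2 := by
      have := abs_le.mp hφε.le; linarith [this.2]
    linarith
  have h0 : (0:ℝ) ≤ x + φ x := by
    obtain ⟨c⟩ := hΩ
    exact le_trans (abs_nonneg _) (hbound c 0)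
  refine Real.sSup_le ?_ h0
  rintro t ⟨c, r, rfl⟩
  exact hbound c r
end

section
/- For μ a probability measure on the circle (or on ℝ) and U the uniform distribution (on the circle), d_D(μ,U) ≤ 3·d_P(μ,U), where d_D is the discrepancy metric and d_P the Prokhorov metric. -/
open MeasureTheory Set Metric
open scoped ENNReal

/-- Membership in a `cthickening` gives small `infDist`. -/
lemma infDist_le_of_mem_cthickening {X : Type*} [PseudoMetricSpace X] {ε : ℝ}
    {s : Set X} {x : X} (hε : 0 ≤ ε) (hx : x ∈ cthickening ε s) : infDist x s ≤ ε := by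
  rw [mem_cthickening_iff] at hx
  calc infDist x s = (EMetric.infEdist x s).toReal := rfl
    _ ≤ (ENNReal.ofReal ε).toReal := ENNReal.toReal_mono ENNReal.ofReal_ne_top hx
    _ = ε := ENNReal.toReal_ofReal hε

/-- The cthickening of a closed ball is inside a bigger closed ball. -/
lemma cthickening_closedBall_subset {X : Type*} [PseudoMetricSpace X] {ε r : ℝ}
    (hr : 0 ≤ r) (hε : 0 ≤ ε) (c : X) :
    cthickening ε (closedBall c r) ⊆ closedBall c (r + ε) := by
  intro x hx
  have hne : (closedBall c r).Nonempty := ⟨c, mem_closedBall_self hr⟩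
  have h1 : infDist x (closedBall c r) ≤ ε := infDist_le_of_mem_cthickening hε hx
  by_contra hmem
  simp only [mem_closedBall, not_le] at hmem
  have h2 : infDist x (closedBall c r) < dist x c - r := by linarith
  obtain ⟨y, hy, hxy⟩ := (infDist_lt_iff hne).mp h2
  have : dist x c ≤ dist x y + dist y c := dist_triangle x y c
  rw [mem_closedBall] at hy
  linarith

/-- The cthickening of the complement of a closed ball avoids the smaller open ball. -/
lemma cthickening_compl_closedBall_subset {X : Type*} [PseudoMetricSpace X] {ε r : ℝ}
    (hε : 0 ≤ ε) (c : X) : cthickening ε ((closedBall c r)ᶜ) ⊆ (ball c (r - ε))ᶜ := by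
  intro x hx
  rcases eq_empty_or_nonempty ((closedBall c r)ᶜ) with hemp | hne
  · rw [hemp, cthickening_empty] at hx; exact absurd hx (notMem_empty x)
  · have h1 : infDist x ((closedBall c r)ᶜ) ≤ ε := infDist_le_of_mem_cthickening hε hx
    intro hball
    rw [mem_ball] at hball
    have h2 : infDist x ((closedBall c r)ᶜ) < r - dist x c := by linarith
    obtain ⟨y, hy, hxy⟩ := (infDist_lt_iff hne).mp h2
    simp only [mem_compl_iff, mem_closedBall, not_le] at hy
    have : dist y c ≤ dist y x + dist x c := dist_triangle y x c
    rw [dist_comm y x] at this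
    linarith

lemma unit_vol_closedBall (c : UnitAddCircle) (r : ℝ) :
    ((volume : Measure UnitAddCircle) (closedBall c r)).toReal = max (min 1 (2 * r)) 0 := by
  rw [AddCircle.volume_closedBall, ENNReal.toReal_ofReal']

/-- Core estimate: for admissible `ε`, the discrepancy on any ball is at most `3ε`. -/
lemma core_estimate (μ : Measure UnitAddCircle) [IsProbabilityMeasure μ] {ε : ℝ} (hε : 0 < ε)
    (H : ∀ B : Set UnitAddCircle, MeasurableSet B →
      (μ B).toReal ≤ ((volume : Measure UnitAddCircle) (cthickening ε B)).toReal + ε)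
    (c : UnitAddCircle) (r : ℝ) :
    |(μ (closedBall c r)).toReal -
      ((volume : Measure UnitAddCircle) (closedBall c r)).toReal| ≤ 3 * ε := by
  rcases lt_or_ge r 0 with hr | hr
  · rw [closedBall_eq_empty.mpr hr]
    simp only [measure_empty, ENNReal.toReal_zero, sub_zero, abs_zero]
    linarith
  · set B := closedBall c r with hBdef
    set a := (μ B).toReal with ha
    have hmin : 0 ≤ min 1 (2 * r) := le_min zero_le_one (by linarith)
    -- upper bound
    have hub : a ≤ min 1 (2 * r) + 3 * ε := by
      have h1 := H B measurableSet_closedBall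
      have h2 : ((volume : Measure UnitAddCircle) (cthickening ε B)).toReal ≤
          ((volume : Measure UnitAddCircle) (closedBall c (r + ε))).toReal :=
        ENNReal.toReal_mono (measure_ne_top _ _)
          (measure_mono (cthickening_closedBall_subset hr hε.le c))
      rw [unit_vol_closedBall] at h2
      have h3 : max (min 1 (2 * (r + ε))) 0 ≤ min 1 (2 * r) + 2 * ε := by
        refine max_le ?_ (by linarith)
        rcases le_total (1 : ℝ) (2 * (r + ε)) with h' | h'
        · rw [min_eq_left h']
          rcases le_total (1 : ℝ) (2 * r) with h'' | h''
          · rw [min_eq_left h'']; linarith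
          · rw [min_eq_right h'']; linarith
        · have h'' : 2 * r ≤ 1 := by linarith
          rw [min_eq_right h', min_eq_right h'']; linarith
      linarith
    -- lower bound
    have hlb : min 1 (2 * r) - 3 * ε ≤ a := by
      have h1 := H Bᶜ measurableSet_closedBall.compl
      have h2 : ((volume : Measure UnitAddCircle) (cthickening ε Bᶜ)).toReal ≤
          ((volume : Measure UnitAddCircle) ((ball c (r - ε))ᶜ)).toReal :=
        ENNReal.toReal_mono (measure_ne_top _ _)
          (measure_mono (cthickening_compl_closedBall_subset hε.le c))
      have hμc : (μ Bᶜ).toReal = 1 - a := by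
        rw [measure_compl measurableSet_closedBall (measure_ne_top _ _), measure_univ,
          ENNReal.toReal_sub_of_le prob_le_one ENNReal.one_ne_top, ENNReal.toReal_one]
      have hle1 : (volume : Measure UnitAddCircle) (ball c (r - ε)) ≤ 1 := by
        have := measure_mono (subset_univ (ball c (r - ε)))
            (μ := (volume : Measure UnitAddCircle))
        simpa using this
      have hvolc : ((volume : Measure UnitAddCircle) ((ball c (r - ε))ᶜ)).toReal =
          1 - ((volume : Measure UnitAddCircle) (ball c (r - ε))).toReal := by
        rw [measure_compl measurableSet_ball (measure_ne_top _ _), AddCircle.measure_univ,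
          ENNReal.ofReal_one,
          ENNReal.toReal_sub_of_le hle1 ENNReal.one_ne_top, ENNReal.toReal_one]
      have hball : ((volume : Measure UnitAddCircle) (ball c (r - ε))).toReal =
          max (min 1 (2 * (r - ε))) 0 := by
        rw [← measure_congr AddCircle.closedBall_ae_eq_ball, unit_vol_closedBall]
      have h4 : min 1 (2 * r) - 2 * ε ≤ max (min 1 (2 * (r - ε))) 0 := by
        refine le_trans ?_ (le_max_left _ _)
        rcases le_total (1 : ℝ) (2 * (r - ε)) with h' | h'
        · rw [min_eq_left h']
          have := min_le_left (1 : ℝ) (2 * r); linarith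
        · rw [min_eq_right h']
          have := min_le_right (1 : ℝ) (2 * r); linarith
      linarith
    rw [unit_vol_closedBall, max_eq_left hmin, abs_le]
    exact ⟨by linarith, by linarith⟩

/-- On the circle, for any probability measure `μ` and the uniform distribution `U`,
the discrepancy is at most three times the Prokhorov distance: `d_D(μ,U) ≤ 3 d_P(μ,U)`. -/
theorem discrepancy_le_three_prokhorov_uniform_circle
    (μ : Measure UnitAddCircle) [IsProbabilityMeasure μ] :
    sSup {t : ℝ | ∃ c r, t = |(μ (closedBall c r)).toReal -
        ((volume : Measure UnitAddCircle) (closedBall c r)).toReal|}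
      ≤ 3 * sInf {ε : ℝ | 0 < ε ∧ ∀ B : Set UnitAddCircle, MeasurableSet B →
        (μ B).toReal ≤ ((volume : Measure UnitAddCircle) (cthickening ε B)).toReal + ε} := by
  set S := {ε : ℝ | 0 < ε ∧ ∀ B : Set UnitAddCircle, MeasurableSet B →
        (μ B).toReal ≤ ((volume : Measure UnitAddCircle) (cthickening ε B)).toReal + ε}
  have hS : (1 : ℝ) ∈ S := by
    refine ⟨one_pos, fun B hB => ?_⟩
    have h1 : (μ B).toReal ≤ 1 := by
      have := measure_mono (subset_univ B) (μ := μ)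
      rw [measure_univ] at this
      calc (μ B).toReal ≤ (1 : ℝ≥0∞).toReal := ENNReal.toReal_mono ENNReal.one_ne_top this
        _ = 1 := by simp
    have h2 : 0 ≤ ((volume : Measure UnitAddCircle) (cthickening 1 B)).toReal :=
      ENNReal.toReal_nonneg
    linarith
  have hSne : S.Nonempty := ⟨1, hS⟩
  have hSnn : 0 ≤ sInf S := Real.sInf_nonneg (fun x hx => hx.1.le)
  refine Real.sSup_le ?_ (by linarith)
  rintro t ⟨c, r, rfl⟩
  rw [show (3 : ℝ) * sInf S = sInf S * 3 by ring, ← div_le_iff₀ (by norm_num : (0:ℝ) < 3)]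
  refine le_csInf hSne fun ε hε => ?_
  rw [div_le_iff₀ (by norm_num : (0:ℝ) < 3), mul_comm]
  exact core_estimate μ hε.1 hε.2 c r
end

section
/- On a complete separable metric space Ω, the Prokhorov metric d_P and the Wasserstein metric d_W satisfy d_P(μ,ν)² ≤ d_W(μ,ν) ≤ (diam(Ω)+1)·d_P(μ,ν), where diam(Ω) = sup{d(x,y) : x,y ∈ Ω} is assumed finite. -/
/-!
A coupling `J` of `μ` and `ν` gives `μ B ≤ ν (cthickening ε B) + J {ε < d}` (the easy half of
Strassen's theorem), and by Markov's inequality `J {ε < d} ≤ ε` once `∫ d ∂J ≤ ε²`; this gives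
`d_P² ≤ d_W`. Conversely, a coupling with `J {r < d} ≤ r` costs at most `r + diam Ω · r`, so it
suffices to build, from the Prokhorov bound at level `ε`, such couplings for every `r > ε`.
For that, cut `Ω` into finitely many cells of small diameter and one cell of small mass. The
Prokhorov bound then says that the cell masses satisfy Hall's condition with deficiency `ε` for
the relation "the cells are `ε`-close". After scaling and rounding the masses to integers, Hall's
marriage theorem gives a transport plan between the cells that moves mass at most `ε` (up to
rounding) between cells that are not close; spreading each entry of the plan as a product of
conditional measures on the corresponding pair of cells gives the coupling.
-/

open Finset MeasureTheory ProbabilityTheory Metric Filter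

section Hall

variable {ι κ : Type*} [Fintype κ] (R : ι → κ → Prop)

theorem exists_injective_sigma_of_hall (α : ι → ℕ) (β : κ → ℕ) (K : ℕ)
    (hall : ∀ (S : Finset ι) (T : Finset κ), (∀ i ∈ S, ∀ j, R i j → j ∈ T) →
      ∑ i ∈ S, α i ≤ ∑ j ∈ T, β j + K) :
    ∃ f : (Σ i, Fin (α i)) → (Σ j, Fin (β j)) ⊕ Fin K, Function.Injective f ∧
      ∀ x y, f x = .inl y → R x.1 y.1 := by
  classical
  -- Hall's theorem for `α i` copies of each `i` against `β j` copies of each `j` together with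
  -- `K` jokers, which are related to everything.
  obtain ⟨f, hf, hfR⟩ := (Fintype.all_card_le_filter_rel_iff_exists_injective
    fun (x : Σ i, Fin (α i)) => Sum.elim (fun (y : Σ j, Fin (β j)) => R x.1 y.1)
      fun (_ : Fin K) => True).1 <| by
    intro A
    obtain rfl | ⟨x₀, hx₀⟩ := A.eq_empty_or_nonempty
    · simp
    set S := A.image Sigma.fst
    set T : Finset κ := {j | ∃ i ∈ S, R i j}
    calc #A ≤ #(S.sigma fun i => (univ : Finset (Fin (α i)))) :=
          card_le_card fun x hx => by simpa [S] using ⟨x.2, hx⟩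
      _ ≤ ∑ j ∈ T, β j + K := by
          simpa using hall S T fun i hi j hij => by simpa [T] using ⟨i, hi, hij⟩
      _ = #((T.sigma fun j => (univ : Finset (Fin (β j)))).disjSum univ) := by simp
      _ ≤ _ := card_le_card <| by
          rintro (⟨j, k⟩ | k) hy
          · obtain ⟨i, hi, hij⟩ := by simpa [T] using hy
            obtain ⟨x, hx, rfl⟩ := mem_image.1 hi
            simp only [mem_filter, mem_univ, true_and]
            exact ⟨x, hx, hij⟩
          · simp only [mem_filter, mem_univ, true_and]
            exact ⟨x₀, hx₀, trivial⟩
  exact ⟨f, hf, fun x y hxy => by simpa [hxy] using hfR x⟩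

theorem exists_nat_subplan_of_hall [Fintype ι] (α : ι → ℕ) (β : κ → ℕ) (K : ℕ)
    (hall : ∀ (S : Finset ι) (T : Finset κ), (∀ i ∈ S, ∀ j, R i j → j ∈ T) →
      ∑ i ∈ S, α i ≤ ∑ j ∈ T, β j + K) :
    ∃ m : ι → κ → ℕ, (∀ i j, ¬ R i j → m i j = 0) ∧ (∀ i, ∑ j, m i j ≤ α i) ∧
      (∀ j, ∑ i, m i j ≤ β j) ∧ ∑ i, α i ≤ ∑ i, ∑ j, m i j + K := by
  classical
  obtain ⟨f, hf, hfR⟩ := exists_injective_sigma_of_hall R α β K hall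
  let π : (Σ j, Fin (β j)) ⊕ Fin K → Option κ := Sum.elim (fun y => some y.1) fun _ => none
  have hfib : ∀ o, #{x | π (f x) = o} ≤ #{y | π y = o} := fun o =>
    card_le_card_of_injOn f (fun x hx => by simpa using hx) hf.injOn
  have hsigma : ∀ o, #{x | π (f x) = o} = ∑ i, #{k : Fin (α i) | π (f ⟨i, k⟩) = o} := fun o => by
    simp only [card_filter]
    exact Fintype.sum_sigma _
  have hrow : ∀ i, α i = #{k : Fin (α i) | π (f ⟨i, k⟩) = none} +
      ∑ j, #{k : Fin (α i) | π (f ⟨i, k⟩) = some j} := fun i => by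
    rw [← Fintype.sum_option fun o => #{k : Fin (α i) | π (f ⟨i, k⟩) = o}]
    simpa using card_eq_sum_card_fiberwise (s := univ) (t := univ)
      (f := fun k => π (f ⟨i, k⟩)) (by simp)
  refine ⟨fun i j => #{k : Fin (α i) | π (f ⟨i, k⟩) = some j}, fun i j hij => ?_,
    fun i => (hrow i).symm ▸ le_add_self, fun j => ?_, ?_⟩
  · rw [card_eq_zero, filter_eq_empty_iff]
    intro k _ hk
    rcases hfk : f ⟨i, k⟩ with y | l <;> simp only [hfk, π, Sum.elim_inl, Sum.elim_inr,
      reduceCtorEq, Option.some.injEq] at hk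
    exact hij (hk ▸ hfR _ y hfk)
  · rw [← hsigma]
    refine (hfib _).trans_eq ?_
    rw [card_filter, Fintype.sum_sum_type, Fintype.sum_sigma]
    simp [π]
  · have hK : #{x | π (f x) = none} ≤ K := (hfib none).trans_eq <| by
      rw [card_filter, Fintype.sum_sum_type]
      simp [π]
    rw [hsigma] at hK
    calc ∑ i, α i = ∑ i, #{k : Fin (α i) | π (f ⟨i, k⟩) = none} +
          ∑ i, ∑ j, #{k : Fin (α i) | π (f ⟨i, k⟩) = some j} := by
          rw [← sum_add_distrib]
          exact sum_congr rfl fun i _ => hrow i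
      _ ≤ _ := by beta_reduce; omega

end Hall

section Plan

variable {ι κ : Type*} [Fintype κ]

theorem hall_floor_mul (R : ι → κ → Prop) {a : ι → ℝ} {b : κ → ℝ} (ha : ∀ i, 0 ≤ a i)
    {ε : ℝ} (hall : ∀ (S : Finset ι) (T : Finset κ), (∀ i ∈ S, ∀ j, R i j → j ∈ T) →
      ∑ i ∈ S, a i ≤ ∑ j ∈ T, b j + ε) (M : ℕ) (S : Finset ι) (T : Finset κ)
    (hST : ∀ i ∈ S, ∀ j, R i j → j ∈ T) :
    ∑ i ∈ S, ⌊M * a i⌋₊ ≤ ∑ j ∈ T, ⌊M * b j⌋₊ + (⌈M * ε⌉₊ + Fintype.card κ) := by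
  have hT : (#T : ℝ) ≤ Fintype.card κ := by exact_mod_cast card_le_univ T
  suffices (∑ i ∈ S, (⌊M * a i⌋₊ : ℝ)) ≤
      ∑ j ∈ T, (⌊M * b j⌋₊ : ℝ) + (⌈M * ε⌉₊ + Fintype.card κ) by exact_mod_cast this
  calc ∑ i ∈ S, (⌊M * a i⌋₊ : ℝ) ≤ M * ∑ i ∈ S, a i := by
        rw [mul_sum]
        exact sum_le_sum fun i _ => Nat.floor_le (mul_nonneg M.cast_nonneg (ha i))
    _ ≤ M * (∑ j ∈ T, b j + ε) := by gcongr; exact hall S T hST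
    _ = ∑ j ∈ T, M * b j + M * ε := by rw [mul_add, mul_sum]
    _ ≤ ∑ j ∈ T, ((⌊M * b j⌋₊ : ℝ) + 1) + ⌈M * ε⌉₊ := by
        gcongr with j
        · exact (Nat.lt_floor_add_one _).le
        · exact Nat.le_ceil _
    _ ≤ _ := by
        rw [sum_add_distrib]
        simp only [sum_const, nsmul_eq_mul, mul_one]
        linarith

theorem exists_subplan_of_hall [Fintype ι] (R : ι → κ → Prop) {a : ι → ℝ} {b : κ → ℝ}
    (ha : ∀ i, 0 ≤ a i) (hb : ∀ j, 0 ≤ b j) {ε θ : ℝ} (hθ : 0 < θ)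
    (hall : ∀ (S : Finset ι) (T : Finset κ), (∀ i ∈ S, ∀ j, R i j → j ∈ T) →
      ∑ i ∈ S, a i ≤ ∑ j ∈ T, b j + ε) :
    ∃ w : ι → κ → ℝ, (∀ i j, 0 ≤ w i j) ∧ (∀ i j, ¬ R i j → w i j = 0) ∧
      (∀ i, ∑ j, w i j ≤ a i) ∧ (∀ j, ∑ i, w i j ≤ b j) ∧
      ∑ i, a i ≤ ∑ i, ∑ j, w i j + ε + θ := by
  have hε : 0 ≤ ε := by simpa using hall ∅ ∅ (by simp)
  -- Scale by `M` and round down: the rounding of `b` costs `card κ` jokers, and `M` is so large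
  -- that all rounding losses, divided by `M`, stay below `θ`.
  obtain ⟨M, hM⟩ := exists_nat_gt ((Fintype.card ι + Fintype.card κ + 1) / θ)
  have hM0 : (0 : ℝ) < M := (div_pos (by positivity) hθ).trans hM
  have hfloor : ∀ x : ℝ, 0 ≤ x → (⌊M * x⌋₊ : ℝ) ≤ M * x := fun x hx =>
    Nat.floor_le (by positivity)
  obtain ⟨m, hR, hrow, hcol, htot⟩ := exists_nat_subplan_of_hall R (fun i => ⌊M * a i⌋₊)
    (fun j => ⌊M * b j⌋₊) (⌈M * ε⌉₊ + Fintype.card κ) (hall_floor_mul R ha hall M)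
  refine ⟨fun i j => m i j / M, fun i j => by positivity, fun i j h => by simp [hR i j h],
    fun i => ?_, fun j => ?_, ?_⟩
  · rw [← sum_div, div_le_iff₀' hM0]
    exact (by exact_mod_cast hrow i : ∑ j, (m i j : ℝ) ≤ ⌊M * a i⌋₊).trans (hfloor _ (ha i))
  · rw [← sum_div, div_le_iff₀' hM0]
    exact (by exact_mod_cast hcol j : ∑ i, (m i j : ℝ) ≤ ⌊M * b j⌋₊).trans (hfloor _ (hb j))
  · have hfl : M * ∑ i, a i ≤ ∑ i, (⌊M * a i⌋₊ : ℝ) + Fintype.card ι := by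
      calc M * ∑ i, a i = ∑ i, M * a i := mul_sum _ _ _
        _ ≤ ∑ i, ((⌊M * a i⌋₊ : ℝ) + 1) := sum_le_sum fun i _ => (Nat.lt_floor_add_one _).le
        _ = _ := by simp [sum_add_distrib]
    have hceil : (⌈M * ε⌉₊ : ℝ) < M * ε + 1 := Nat.ceil_lt_add_one (by positivity)
    have htot' : (∑ i, ⌊M * a i⌋₊ : ℝ) ≤ ∑ i, ∑ j, (m i j : ℝ) + (⌈M * ε⌉₊ + Fintype.card κ) := by
      exact_mod_cast htot
    have hMθ := (div_lt_iff₀ hθ).1 hM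
    simp only [← sum_div]
    rw [← sub_le_iff_le_add, ← sub_le_iff_le_add, le_div_iff₀ hM0]
    linarith

theorem exists_completion_of_subplan [Fintype ι] {a : ι → ℝ} {b : κ → ℝ} {w : ι → κ → ℝ}
    (hrow : ∀ i, ∑ j, w i j ≤ a i) (hcol : ∀ j, ∑ i, w i j ≤ b j)
    (hab : ∑ i, a i = ∑ j, b j) :
    ∃ v : ι → κ → ℝ, (∀ i j, 0 ≤ v i j) ∧ (∀ i, ∑ j, (w i j + v i j) = a i) ∧
      (∀ j, ∑ i, (w i j + v i j) = b j) := by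
  -- Spread the residual row masses over the columns in proportion to the residual column masses.
  set r : ι → ℝ := fun i => a i - ∑ j, w i j
  set c : κ → ℝ := fun j => b j - ∑ i, w i j
  set s := ∑ i, r i
  have hr : ∀ i, 0 ≤ r i := fun i => sub_nonneg.2 (hrow i)
  have hc : ∀ j, 0 ≤ c j := fun j => sub_nonneg.2 (hcol j)
  have hcs : ∑ j, c j = s := by simp only [c, s, r, sum_sub_distrib, hab, sum_comm (γ := ι)]
  have hcancel : ∀ x, (s = 0 → x = 0) → x * s / s = x := fun x hx => by
    rcases eq_or_ne s 0 with h | h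
    · simp [hx h]
    · exact mul_div_cancel_right₀ x h
  refine ⟨fun i j => r i * c j / s, fun i j =>
    div_nonneg (mul_nonneg (hr i) (hc j)) (sum_nonneg fun i _ => hr i), fun i => ?_, fun j => ?_⟩
  · rw [sum_add_distrib, ← sum_div, ← mul_sum, hcs, hcancel _ fun h =>
      (sum_eq_zero_iff_of_nonneg fun i _ => hr i).1 h i (mem_univ i)]
    simp [r]
  · rw [sum_add_distrib, ← sum_div, ← sum_mul, mul_comm, hcancel _ fun h =>
      (sum_eq_zero_iff_of_nonneg fun j _ => hc j).1 (hcs.trans h) j (mem_univ j)]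
    simp [c]

theorem exists_plan_of_hall [Fintype ι] (R : ι → κ → Prop) {a : ι → ℝ} {b : κ → ℝ} (ha : ∀ i, 0 ≤ a i)
    (hb : ∀ j, 0 ≤ b j) (hab : ∑ i, a i = ∑ j, b j) {ε θ : ℝ} (hθ : 0 < θ)
    (hall : ∀ (S : Finset ι) (T : Finset κ), (∀ i ∈ S, ∀ j, R i j → j ∈ T) →
      ∑ i ∈ S, a i ≤ ∑ j ∈ T, b j + ε) :
    ∃ w v : ι → κ → ℝ, (∀ i j, 0 ≤ w i j) ∧ (∀ i j, 0 ≤ v i j) ∧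
      (∀ i j, ¬ R i j → w i j = 0) ∧ (∀ i, ∑ j, (w i j + v i j) = a i) ∧
      (∀ j, ∑ i, (w i j + v i j) = b j) ∧ ∑ i, ∑ j, v i j ≤ ε + θ := by
  obtain ⟨w, hw, hwR, hrow, hcol, htot⟩ := exists_subplan_of_hall R ha hb hθ hall
  obtain ⟨v, hv, hvrow, hvcol⟩ := exists_completion_of_subplan hrow hcol hab
  refine ⟨w, v, hw, hv, hwR, hvrow, hvcol, ?_⟩
  have : ∑ i, ∑ j, v i j = ∑ i, a i - ∑ i, ∑ j, w i j := by
    simp only [← hvrow, sum_add_distrib, add_sub_cancel_left]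
  linarith

end Plan

theorem cond_prod_cond {α β : Type*} [MeasurableSpace α] [MeasurableSpace β]
    (μ : Measure α) (ν : Measure β) [IsFiniteMeasure μ] [IsFiniteMeasure ν] (s : Set α)
    (t : Set β) : (μ[|s]).prod (ν[|t]) = (μ.prod ν)[|s ×ˢ t] := by
  simp only [ProbabilityTheory.cond]
  rw [Measure.prod_smul_left, Measure.prod_smul_right, smul_smul, Measure.prod_restrict,
    Measure.prod_prod,
    ENNReal.mul_inv (Or.inr (measure_ne_top ν t)) (Or.inl (measure_ne_top μ s))]

section cellCoupling

variable {α β ι κ : Type*} [MeasurableSpace α] [MeasurableSpace β] [Fintype ι] [Fintype κ]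

noncomputable def cellCoupling (μ : Measure α) (ν : Measure β) (X : α → ι) (Y : β → κ)
    (w : ι → κ → ℝ) : Measure (α × β) :=
  ∑ p : ι × κ, ENNReal.ofReal (w p.1 p.2) • (μ[|X ⁻¹' {p.1}]).prod (ν[|Y ⁻¹' {p.2}])

variable {μ : Measure α} {ν : Measure β} {X : α → ι} {Y : β → κ} {w : ι → κ → ℝ}

theorem map_swap_cellCoupling :
    (cellCoupling μ ν X Y w).map Prod.swap = cellCoupling ν μ Y X (fun j i => w i j) := by
  simp only [cellCoupling]
  rw [← Measure.sum_fintype, Measure.map_sum measurable_swap.aemeasurable, Measure.sum_fintype]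
  simp only [Measure.map_smul, Measure.prod_swap]
  exact Fintype.sum_equiv (Equiv.prodComm ι κ) _ _ fun _ => rfl

theorem cellCoupling_fst [IsFiniteMeasure μ] [MeasurableSpace ι] [DiscreteMeasurableSpace ι]
    (hX : Measurable X) (hw : ∀ i j, 0 ≤ w i j) (hrow : ∀ i, ∑ j, w i j = μ.real (X ⁻¹' {i}))
    (hcol : ∀ j, ∑ i, w i j = ν.real (Y ⁻¹' {j})) :
    (cellCoupling μ ν X Y w).fst = μ := by
  have hterm : ∀ i j, (ENNReal.ofReal (w i j) • (μ[|X ⁻¹' {i}]).prod (ν[|Y ⁻¹' {j}])).fst =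
      ENNReal.ofReal (w i j) • μ[|X ⁻¹' {i}] := by
    intro i j
    rcases eq_or_ne (ν.real (Y ⁻¹' {j})) 0 with h | h
    · have : w i j = 0 := le_antisymm ((single_le_sum (fun i _ => hw i j) (mem_univ i)).trans
        ((hcol j).trans h).le) (hw i j)
      simp [this]
    · rw [measureReal_def, ENNReal.toReal_ne_zero] at h
      have := cond_isProbabilityMeasure_of_finite h.1 h.2
      rw [Measure.fst, Measure.map_smul, ← Measure.fst, Measure.fst_prod]
  simp only [cellCoupling]
  rw [← Measure.sum_fintype, Measure.fst_sum, Measure.sum_fintype, Fintype.sum_prod_type]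
  simp only [hterm, ← sum_smul, ← ENNReal.ofReal_sum_of_nonneg fun j _ => hw _ j, hrow,
    ofReal_measureReal (measure_ne_top _ _)]
  exact sum_meas_smul_cond_fiber hX μ

theorem cellCoupling_snd [IsFiniteMeasure ν] [MeasurableSpace κ] [DiscreteMeasurableSpace κ]
    (hY : Measurable Y) (hw : ∀ i j, 0 ≤ w i j) (hrow : ∀ i, ∑ j, w i j = μ.real (X ⁻¹' {i}))
    (hcol : ∀ j, ∑ i, w i j = ν.real (Y ⁻¹' {j})) :
    (cellCoupling μ ν X Y w).snd = ν := by
  rw [← Measure.fst_map_swap, map_swap_cellCoupling]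
  exact cellCoupling_fst hY (fun j i => hw i j) hcol hrow

theorem cellCoupling_apply_le [IsFiniteMeasure μ] [IsFiniteMeasure ν] [MeasurableSpace ι]
    [MeasurableSingletonClass ι] [MeasurableSpace κ] [MeasurableSingletonClass κ]
    (hX : Measurable X) (hY : Measurable Y) (U : Set (α × β)) {v : ι → κ → ℝ}
    (hv : ∀ i j, 0 ≤ v i j) (hwv : ∀ x y, (x, y) ∈ U → w (X x) (Y y) ≤ v (X x) (Y y)) :
    cellCoupling μ ν X Y w U ≤ ENNReal.ofReal (∑ i, ∑ j, v i j) := by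
  simp only [cellCoupling, Measure.coe_finsetSum, Finset.sum_apply, Measure.smul_apply,
    smul_eq_mul]
  rw [ENNReal.ofReal_sum_of_nonneg fun i _ => sum_nonneg fun j _ => hv i j]
  simp only [ENNReal.ofReal_sum_of_nonneg fun j _ => hv _ j]
  rw [← Fintype.sum_prod_type']
  gcongr with p
  rw [cond_prod_cond]
  set C := (X ⁻¹' {p.1}) ×ˢ (Y ⁻¹' {p.2})
  by_cases hCU : (C ∩ U).Nonempty
  · obtain ⟨⟨x, y⟩, ⟨hx, hy⟩, hxy⟩ := hCU
    calc ENNReal.ofReal (w p.1 p.2) * (μ.prod ν)[|C] U ≤ ENNReal.ofReal (v p.1 p.2) * 1 := by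
          gcongr
          · simpa [show X x = p.1 from hx, show Y y = p.2 from hy] using hwv x y hxy
          · exact prob_le_one
      _ = _ := mul_one _
  · rw [cond_apply ((hX (measurableSet_singleton _)).prod (hY (measurableSet_singleton _))),
      Set.not_nonempty_iff_eq_empty.1 hCU]
    simp

end cellCoupling

section Partition

variable {Ω : Type*} [PseudoMetricSpace Ω] [TopologicalSpace.SeparableSpace Ω]
  [MeasurableSpace Ω] [OpensMeasurableSpace Ω]

theorem exists_measurable_nat_dist_lt [Nonempty Ω] {η : ℝ} (hη : 0 < η) :
    ∃ X : Ω → ℕ, Measurable X ∧ ∀ x y, X x = X y → dist x y < η := by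
  classical
  set u := TopologicalSpace.denseSeq Ω
  have hu : ∀ x, ∃ k, x ∈ ball (u k) (η / 2) := fun x =>
    denseRange_iff.1 (TopologicalSpace.denseRange_denseSeq Ω) x _ (half_pos hη)
  refine ⟨fun x => Nat.find (hu x), measurable_to_countable' fun k => ?_, fun x y hxy => ?_⟩
  · have : (fun x => Nat.find (hu x)) ⁻¹' {k} =
        ball (u k) (η / 2) ∩ ⋂ j < k, (ball (u j) (η / 2))ᶜ := by
      ext x
      simp [Nat.find_eq_iff]
    rw [this]
    exact measurableSet_ball.inter
      (MeasurableSet.biInter (Set.to_countable _) fun j _ => measurableSet_ball.compl)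
  · have hx := Nat.find_spec (hu x)
    have hy := Nat.find_spec (hu y)
    simp only at hxy
    rw [hxy, mem_ball] at hx
    rw [mem_ball] at hy
    linarith [dist_triangle_right x y (u (Nat.find (hu y)))]

theorem exists_measurable_fin_dist_lt (ρ : Measure Ω) [IsFiniteMeasure ρ] {η δ : ℝ} (hη : 0 < η)
    (hδ : 0 < δ) : ∃ (N : ℕ) (Z : Ω → Fin (N + 1)), Measurable Z ∧
      (∀ x y, Z x = Z y → Z x ≠ Fin.last N → dist x y < η) ∧
      ρ (Z ⁻¹' {Fin.last N}) ≤ ENNReal.ofReal δ := by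
  rcases isEmpty_or_nonempty Ω with hΩ | hΩ
  · exact ⟨0, fun _ => 0, measurable_const, fun x => isEmptyElim x,
      by simp [Set.eq_empty_of_isEmpty]⟩
  obtain ⟨X, hX, hXdist⟩ := exists_measurable_nat_dist_lt (Ω := Ω) hη
  have htail : Tendsto (fun N => ρ {x | N ≤ X x}) atTop (nhds 0) := by
    have := tendsto_measure_iInter_atTop (μ := ρ) (s := fun N => {x | N ≤ X x})
      (fun N => (hX measurableSet_Ici).nullMeasurableSet)
      (fun M N hMN x hx => hMN.trans hx) ⟨0, measure_ne_top ρ _⟩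
    have hempty : (⋂ N, {x | N ≤ X x}) = ∅ :=
      Set.eq_empty_of_forall_notMem fun x hx => by simpa using Set.mem_iInter.1 hx (X x + 1)
    rwa [hempty, measure_empty] at this
  obtain ⟨N, hN⟩ := (htail.eventually (gt_mem_nhds (ENNReal.ofReal_pos.2 hδ))).exists
  let trunc : ℕ → Fin (N + 1) := fun k => ⟨min k N, Nat.lt_succ_of_le (min_le_right _ _)⟩
  refine ⟨N, trunc ∘ X, measurable_from_nat.comp hX, fun x y hxy hlast => hXdist x y ?_, ?_⟩
  · simp only [Function.comp, Fin.ext_iff, Fin.val_last, ne_eq, trunc] at hxy hlast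
    omega
  · refine le_of_eq_of_le (congrArg ρ ?_) hN.le
    ext x
    simp [trunc, Fin.ext_iff]

end Partition

theorem setOf_lt_dist_subset {Ω ι : Type*} [PseudoMetricSpace Ω] {Z : Ω → ι} {i₀ : ι} {r η : ℝ}
    (hZ : ∀ x y, Z x = Z y → Z x ≠ i₀ → dist x y < η) :
    {p : Ω × Ω | r + 2 * η < dist p.1 p.2} ⊆
      {p | ¬ ∃ x y, Z x = Z p.1 ∧ Z y = Z p.2 ∧ dist x y < r} ∪ Prod.fst ⁻¹' (Z ⁻¹' {i₀}) ∪
        Prod.snd ⁻¹' (Z ⁻¹' {i₀}) := by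
  rintro ⟨x', y'⟩ hp
  by_contra h
  simp only [Set.mem_union, Set.mem_ofPred_eq, not_or, not_not, Set.mem_preimage,
    Set.mem_singleton_iff] at h hp
  obtain ⟨⟨⟨x, y, hx, hy, hxy⟩, hx'⟩, hy'⟩ := h
  have h1 := hZ x' x hx.symm hx'
  have h2 := hZ y y' hy (by rwa [hy])
  linarith [dist_triangle4 x' x y y']

section Coupling

variable {Ω : Type*} [PseudoMetricSpace Ω] [MeasurableSpace Ω]

theorem measure_le_measure_cthickening_add {μ ν : Measure Ω} {J : Measure (Ω × Ω)}
    (hJ₁ : J.fst = μ) (hJ₂ : J.snd = ν) {B : Set Ω} (hB : MeasurableSet B) (ε : ℝ) :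
    μ B ≤ ν (cthickening ε B) + J {p | ε < dist p.1 p.2} := by
  have hsub : Prod.fst ⁻¹' B ⊆ Prod.snd ⁻¹' cthickening ε B ∪ {p | ε < dist p.1 p.2} := by
    intro p hp
    by_cases h : dist p.1 p.2 ≤ ε
    · exact Or.inl (mem_cthickening_of_dist_le p.2 p.1 ε B hp (dist_comm p.2 p.1 ▸ h))
    · exact Or.inr (not_le.1 h)
  calc μ B = J (Prod.fst ⁻¹' B) := by rw [← hJ₁, Measure.fst_apply hB]
    _ ≤ J (Prod.snd ⁻¹' cthickening ε B) + J {p | ε < dist p.1 p.2} :=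
        (measure_mono hsub).trans (measure_union_le _ _)
    _ ≤ ν (cthickening ε B) + J {p | ε < dist p.1 p.2} := by
        rw [← hJ₂]
        gcongr
        exact Measure.le_map_apply measurable_snd.aemeasurable _

theorem hall_of_prokhorov {ι : Type*} [MeasurableSpace ι] [MeasurableSingletonClass ι]
    {Z : Ω → ι} (hZ : Measurable Z) {μ ν : Measure Ω} [IsFiniteMeasure μ] [IsFiniteMeasure ν]
    {ε ε' : ℝ} (hεε' : ε < ε')
    (hP : ∀ B, MeasurableSet B → μ.real B ≤ ν.real (cthickening ε B) + ε) (S T : Finset ι)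
    (hST : ∀ i ∈ S, ∀ j, (∃ x y, Z x = i ∧ Z y = j ∧ dist x y < ε') → j ∈ T) :
    ∑ i ∈ S, μ.real (Z ⁻¹' {i}) ≤ ∑ j ∈ T, ν.real (Z ⁻¹' {j}) + ε := by
  have hε : 0 ≤ ε := by simpa using hP ∅ MeasurableSet.empty
  have hsub : cthickening ε (Z ⁻¹' S) ⊆ Z ⁻¹' T := by
    intro y hy
    obtain ⟨x, hx, hxy⟩ := mem_thickening_iff.1
      (cthickening_subset_thickening' (hε.trans_lt hεε') hεε' _ hy)
    exact hST (Z x) hx (Z y) ⟨x, y, rfl, rfl, dist_comm x y ▸ hxy⟩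
  rw [sum_measureReal_preimage_singleton _ fun i _ => hZ (measurableSet_singleton i),
    sum_measureReal_preimage_singleton _ fun j _ => hZ (measurableSet_singleton j)]
  exact (hP _ (hZ S.measurableSet)).trans (add_le_add_left (measureReal_mono (μ := ν) hsub) ε)

theorem exists_coupling_measure_dist_gt_le [TopologicalSpace.SeparableSpace Ω]
    [OpensMeasurableSpace Ω] (μ ν : Measure Ω) [IsProbabilityMeasure μ]
    [IsProbabilityMeasure ν] {ε η : ℝ} (hη : 0 < η)
    (hP : ∀ B, MeasurableSet B → μ.real B ≤ ν.real (cthickening ε B) + ε) :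
    ∃ J : Measure (Ω × Ω), J.fst = μ ∧ J.snd = ν ∧
      J {p | ε + η < dist p.1 p.2} ≤ ENNReal.ofReal (ε + η) := by
  have hε : 0 ≤ ε := by simpa using hP ∅ MeasurableSet.empty
  have hη3 : 0 < η / 3 := by positivity
  obtain ⟨N, Z, hZ, hZdist, hlast⟩ := exists_measurable_fin_dist_lt (μ + ν) hη3 hη3
  set R : Fin (N + 1) → Fin (N + 1) → Prop := fun i j =>
    ∃ x y, Z x = i ∧ Z y = j ∧ dist x y < ε + η / 3
  have hsum : ∀ ρ : Measure Ω, [IsProbabilityMeasure ρ] → ∑ i, ρ.real (Z ⁻¹' {i}) = 1 := by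
    intro ρ _
    rw [sum_measureReal_preimage_singleton _ fun i _ => hZ (measurableSet_singleton i)]
    simp
  obtain ⟨w, v, hw, hv, hwR, hrow, hcol, hvsum⟩ := exists_plan_of_hall R
    (fun i => measureReal_nonneg) (fun j => measureReal_nonneg) ((hsum μ).trans (hsum ν).symm)
    hη3 (hall_of_prokhorov hZ (by linarith) hP)
  have hwv : ∀ i j, 0 ≤ w i j + v i j := fun i j => add_nonneg (hw i j) (hv i j)
  set J := cellCoupling μ ν Z Z fun i j => w i j + v i j
  have hJ₁ : J.fst = μ := cellCoupling_fst hZ hwv hrow hcol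
  have hJ₂ : J.snd = ν := cellCoupling_snd hZ hwv hrow hcol
  refine ⟨J, hJ₁, hJ₂, ?_⟩
  set last := Z ⁻¹' {Fin.last N}
  have hsub := setOf_lt_dist_subset (r := ε + η / 3) hZdist
  rw [show ε + η / 3 + 2 * (η / 3) = ε + η by ring] at hsub
  have hfar : J {p | ¬ R (Z p.1) (Z p.2)} ≤ ENNReal.ofReal (ε + η / 3) :=
    (cellCoupling_apply_le hZ hZ _ hv fun x y hxy => by simp [hwR _ _ hxy]).trans
      (ENNReal.ofReal_le_ofReal hvsum)
  have hlast' : J (Prod.fst ⁻¹' last) + J (Prod.snd ⁻¹' last) ≤ ENNReal.ofReal (η / 3) := by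
    have hm : MeasurableSet last := hZ (measurableSet_singleton _)
    rw [← Measure.fst_apply hm, ← Measure.snd_apply hm, hJ₁, hJ₂]
    exact hlast
  calc J {p | ε + η < dist p.1 p.2}
      ≤ J {p | ¬ R (Z p.1) (Z p.2)} + (J (Prod.fst ⁻¹' last) + J (Prod.snd ⁻¹' last)) := by
        rw [← add_assoc]
        refine (measure_mono hsub).trans ((measure_union_le _ _).trans ?_)
        gcongr
        exact measure_union_le _ _
    _ ≤ ENNReal.ofReal (ε + η / 3) + ENNReal.ofReal (η / 3) := add_le_add hfar hlast'
    _ ≤ ENNReal.ofReal (ε + η) := by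
        rw [← ENNReal.ofReal_add (by linarith) hη3.le]
        exact ENNReal.ofReal_le_ofReal (by linarith)

end Coupling

theorem integral_le_add_mul_measureReal_lt {α : Type*} [MeasurableSpace α] {J : Measure α}
    [IsProbabilityMeasure J] {f : α → ℝ} (hf : Measurable f) (hf0 : ∀ x, 0 ≤ f x) {D r : ℝ}
    (hfD : ∀ x, f x ≤ D) (hr : 0 ≤ r) :
    ∫ x, f x ∂J ≤ r + D * J.real {x | r < f x} := by
  set U := {x | r < f x}
  have hU : MeasurableSet U := measurableSet_lt measurable_const hf
  have hint : Integrable (U.indicator (1 : α → ℝ)) J :=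
    (integrable_indicator_iff hU).2 (integrable_const 1).integrableOn
  calc ∫ x, f x ∂J ≤ ∫ x, (r + D * U.indicator 1 x) ∂J :=
        integral_mono_of_nonneg (ae_of_all _ hf0) ((integrable_const r).add (hint.const_mul D))
          (ae_of_all _ fun x => by
            by_cases hx : x ∈ U
            · simp only [hx, Set.indicator_of_mem, Pi.one_apply, mul_one]
              linarith [hfD x]
            · simpa [hx] using not_lt.1 hx)
    _ = r + D * J.real U := by
        rw [integral_add (integrable_const r) (hint.const_mul D), integral_const_mul,
          integral_indicator_one hU]
        simp

theorem isProbabilityMeasure_of_fst_eq {α β : Type*} [MeasurableSpace α] [MeasurableSpace β]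
    {J : Measure (α × β)} {μ : Measure α} [IsProbabilityMeasure μ] (hJ : J.fst = μ) :
    IsProbabilityMeasure J :=
  ⟨by rw [← Measure.fst_univ, hJ, measure_univ]⟩

section Prokhorov

variable {Ω : Type*} [PseudoMetricSpace Ω] [TopologicalSpace.SeparableSpace Ω]
  [MeasurableSpace Ω] [OpensMeasurableSpace Ω] {μ ν : Measure Ω} [IsProbabilityMeasure μ]
  [IsProbabilityMeasure ν]

theorem sq_sInf_prokhorov_le_integral_dist (hbdd : Bornology.IsBounded (Set.univ : Set Ω))
    {J : Measure (Ω × Ω)} (hJ₁ : J.fst = μ) (hJ₂ : J.snd = ν) :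
    (sInf {ε : ℝ | 0 < ε ∧ ∀ B : Set Ω, MeasurableSet B →
        (μ B).toReal ≤ (ν (cthickening ε B)).toReal + ε}) ^ 2 ≤ ∫ p, dist p.1 p.2 ∂J := by
  have := isProbabilityMeasure_of_fst_eq hJ₁
  set r := ∫ p, dist p.1 p.2 ∂J
  have hr : 0 ≤ r := integral_nonneg fun p => dist_nonneg
  have hint : Integrable (fun p : Ω × Ω => dist p.1 p.2) J :=
    .of_bound measurable_dist.aestronglyMeasurable (diam (Set.univ : Set Ω)) (ae_of_all _ fun p =>
      by simpa using dist_le_diam_of_mem hbdd (Set.mem_univ p.1) (Set.mem_univ p.2))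
  have hmem : ∀ ε, √r < ε → 0 < ε ∧ ∀ B : Set Ω, MeasurableSet B →
      (μ B).toReal ≤ (ν (cthickening ε B)).toReal + ε := by
    intro ε hε
    have hε0 : 0 < ε := (Real.sqrt_nonneg r).trans_lt hε
    have hfar : J.real {p | ε < dist p.1 p.2} ≤ ε := by
      have hmarkov := mul_meas_ge_le_integral_of_nonneg (ae_of_all _ fun p => dist_nonneg) hint ε
      have hmono : J.real {p | ε < dist p.1 p.2} ≤ J.real {p | ε ≤ dist p.1 p.2} :=
        measureReal_mono (Set.ofPred_subset_ofPred.2 fun _ => le_of_lt)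
      have hrε : r < ε * ε := by rw [← sq]; exact (Real.sqrt_lt' hε0).1 hε
      nlinarith
    refine ⟨hε0, fun B hB => ?_⟩
    exact (ENNReal.toReal_le_add (measure_le_measure_cthickening_add hJ₁ hJ₂ hB ε)
      (measure_ne_top _ _) (measure_ne_top _ _)).trans (by gcongr; exact hfar)
  have hle : sInf {ε : ℝ | 0 < ε ∧ ∀ B : Set Ω, MeasurableSet B →
      (μ B).toReal ≤ (ν (cthickening ε B)).toReal + ε} ≤ √r :=
    le_of_forall_gt_imp_ge_of_dense fun ε hε => csInf_le ⟨0, fun x hx => hx.1.le⟩ (hmem ε hε)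
  calc _ ≤ √r ^ 2 := pow_le_pow_left₀ (Real.sInf_nonneg fun x hx => hx.1.le) hle 2
    _ = r := Real.sq_sqrt hr

theorem sInf_wasserstein_le_of_prokhorov (hbdd : Bornology.IsBounded (Set.univ : Set Ω)) {ε : ℝ}
    (hP : ∀ B : Set Ω, MeasurableSet B → (μ B).toReal ≤ (ν (cthickening ε B)).toReal + ε) :
    sInf {r : ℝ | ∃ J : Measure (Ω × Ω), J.fst = μ ∧ J.snd = ν ∧ r = ∫ p, dist p.1 p.2 ∂J} ≤
      (diam (Set.univ : Set Ω) + 1) * ε := by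
  set W := {r : ℝ | ∃ J : Measure (Ω × Ω), J.fst = μ ∧ J.snd = ν ∧ r = ∫ p, dist p.1 p.2 ∂J}
  have hW : BddBelow W :=
    ⟨0, by rintro _ ⟨J, -, -, rfl⟩; exact integral_nonneg fun _ => dist_nonneg⟩
  set D := diam (Set.univ : Set Ω)
  have hD : 0 ≤ D := diam_nonneg
  have hε : 0 ≤ ε := by simpa using hP ∅ MeasurableSet.empty
  refine le_of_forall_pos_le_add fun δ hδ => ?_
  set η := δ / (D + 1)
  obtain ⟨J, hJ₁, hJ₂, hJ⟩ := exists_coupling_measure_dist_gt_le μ ν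
    (div_pos hδ (by linarith) : 0 < η) hP
  have := isProbabilityMeasure_of_fst_eq hJ₁
  calc sInf W ≤ ∫ p, dist p.1 p.2 ∂J := csInf_le hW ⟨J, hJ₁, hJ₂, rfl⟩
    _ ≤ (ε + η) + D * J.real {p | ε + η < dist p.1 p.2} :=
        integral_le_add_mul_measureReal_lt measurable_dist (fun _ => dist_nonneg)
          (fun p => dist_le_diam_of_mem hbdd (Set.mem_univ p.1) (Set.mem_univ p.2))
          (by positivity)
    _ ≤ (ε + η) + D * (ε + η) := by
        gcongr
        exact ENNReal.toReal_le_of_le_ofReal (by positivity) hJ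
    _ = (D + 1) * ε + δ := by
        simp only [η]
        field_simp
        ring

end Prokhorov

open MeasureTheory Set Metric

theorem prokhorov_sq_le_wasserstein_le_general (Ω : Type*) [MetricSpace Ω]
    [TopologicalSpace.SeparableSpace Ω] [MeasurableSpace Ω] [BorelSpace Ω]
    (hbdd : Bornology.IsBounded (Set.univ : Set Ω))
    (μ ν : Measure Ω) [IsProbabilityMeasure μ] [IsProbabilityMeasure ν] :
    (sInf {ε : ℝ | 0 < ε ∧ ∀ B : Set Ω, MeasurableSet B →
        (μ B).toReal ≤ (ν (cthickening ε B)).toReal + ε}) ^ 2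
      ≤ sInf {r : ℝ | ∃ J : Measure (Ω × Ω), J.fst = μ ∧ J.snd = ν ∧
          r = ∫ p, dist p.1 p.2 ∂J} ∧
    sInf {r : ℝ | ∃ J : Measure (Ω × Ω), J.fst = μ ∧ J.snd = ν ∧
          r = ∫ p, dist p.1 p.2 ∂J}
      ≤ (Metric.diam (Set.univ : Set Ω) + 1) *
        sInf {ε : ℝ | 0 < ε ∧ ∀ B : Set Ω, MeasurableSet B →
          (μ B).toReal ≤ (ν (cthickening ε B)).toReal + ε} := by
  refine ⟨le_csInf ⟨_, μ.prod ν, Measure.fst_prod, Measure.snd_prod, rfl⟩ ?_, ?_⟩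
  · rintro _ ⟨J, hJ₁, hJ₂, rfl⟩
    exact sq_sInf_prokhorov_le_integral_dist hbdd hJ₁ hJ₂
  · have hD : 0 < diam (univ : Set Ω) + 1 := by linarith [diam_nonneg (s := (univ : Set Ω))]
    have hone : ∀ B : Set Ω, (μ B).toReal ≤ (ν (cthickening 1 B)).toReal + 1 := fun B => by
      linarith [show (μ B).toReal ≤ 1 from measureReal_le_one,
        show 0 ≤ (ν (cthickening 1 B)).toReal from ENNReal.toReal_nonneg]
    rw [mul_comm, ← div_le_iff₀ hD]
    refine le_csInf ⟨1, one_pos, fun B _ => hone B⟩ fun ε hε => ?_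
    rw [div_le_iff₀ hD, mul_comm]
    exact sInf_wasserstein_le_of_prokhorov hbdd hε.2

/-- On a complete separable metric space of finite diameter, the Prokhorov metric `d_P` and
the Wasserstein metric `d_W` satisfy `d_P² ≤ d_W ≤ (diam Ω + 1) d_P`. -/
theorem prokhorov_sq_le_wasserstein_le (Ω : Type*) [MetricSpace Ω] [CompleteSpace Ω]
    [TopologicalSpace.SeparableSpace Ω] [MeasurableSpace Ω] [BorelSpace Ω]
    (hbdd : Bornology.IsBounded (Set.univ : Set Ω))
    (μ ν : Measure Ω) [IsProbabilityMeasure μ] [IsProbabilityMeasure ν] :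
    (sInf {ε : ℝ | 0 < ε ∧ ∀ B : Set Ω, MeasurableSet B →
        (μ B).toReal ≤ (ν (cthickening ε B)).toReal + ε}) ^ 2
      ≤ sInf {r : ℝ | ∃ J : Measure (Ω × Ω), J.fst = μ ∧ J.snd = ν ∧
          r = ∫ p, dist p.1 p.2 ∂J} ∧
    sInf {r : ℝ | ∃ J : Measure (Ω × Ω), J.fst = μ ∧ J.snd = ν ∧
          r = ∫ p, dist p.1 p.2 ∂J}
      ≤ (Metric.diam (Set.univ : Set Ω) + 1) *
        sInf {ε : ℝ | 0 < ε ∧ ∀ B : Set Ω, MeasurableSet B →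
          (μ B).toReal ≤ (ν (cthickening ε B)).toReal + ε} :=
  prokhorov_sq_le_wasserstein_le_general Ω hbdd μ ν
end

section
/- (Pinsker/Kullback inequality) For probability measures μ, ν on a countable state space, 2·d_TV(μ,ν)² ≤ d_I(μ,ν), where d_I is the relative entropy (Kullback–Leibler divergence). -/
/-!
Split the state space into S = {ν < μ} and its complement and put p = μ(S), q = ν(S).
The total variation distance is exactly p - q, while by the log-sum inequality (convexity of
x ↦ x log x) the relative entropy can only decrease when μ and ν are coarse-grained to the
Bernoulli laws (p, 1 - p) and (q, 1 - q). This reduces the claim to two points. There, for fixed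
p, the cross entropy -p log x - (1 - p) log (1 - x) minus 2 (p - x)² has derivative
(p - x)(4 - 1 / (x (1 - x))) ≤ 0 on (0, p), so its value at x = q dominates its value at x = p.
-/

open Real Set

lemma mul_log_add_sub_le_mul_log_div {a b t : ℝ} (ha : 0 ≤ a) (hb : 0 ≤ b) (ht : 0 < t)
    (hab : b = 0 → a = 0) :
    a * log t + (a - b * t) ≤ a * log (a / b) := by
  rcases ha.eq_or_lt with rfl | ha
  · simpa using mul_nonneg hb ht.le
  have hb : 0 < b := hb.lt_of_ne fun h => ha.ne' (hab h.symm)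
  have key := one_sub_inv_le_log_of_pos (show 0 < a / (b * t) by positivity)
  rw [inv_div, log_div ha.ne' (by positivity), log_mul hb.ne' ht.ne'] at key
  rw [log_div ha.ne' hb.ne']
  have := mul_le_mul_of_nonneg_left key ha.le
  rw [mul_sub, mul_one, mul_div_cancel₀ _ ha.ne'] at this
  linarith

section LogSum

variable {ι : Type*} {a b : ι → ℝ}

lemma tsum_pos_of_tsum_pos (hb : ∀ i, 0 ≤ b i) (hbs : Summable b)
    (hab : ∀ i, b i = 0 → a i = 0) (hA : 0 < ∑' i, a i) : 0 < ∑' i, b i := by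
  obtain ⟨i, hi⟩ : ∃ i, 0 < a i := by
    by_contra! h
    exact (tsum_nonpos h).not_gt hA
  exact hbs.tsum_pos hb i ((hb i).lt_of_ne fun h => hi.ne' (hab i h.symm))

theorem mul_log_div_le_tsum_mul_log_div (ha : ∀ i, 0 ≤ a i) (hb : ∀ i, 0 ≤ b i)
    (has : Summable a) (hbs : Summable b) (hab : ∀ i, b i = 0 → a i = 0)
    (hs : Summable fun i => a i * log (a i / b i)) :
    (∑' i, a i) * log ((∑' i, a i) / ∑' i, b i) ≤ ∑' i, a i * log (a i / b i) := by
  set A := ∑' i, a i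
  set B := ∑' i, b i
  rcases (tsum_nonneg ha).eq_or_lt with hA | hA
  · have : a = 0 := (hasSum_zero_iff_of_nonneg ha).1 (hA ▸ has.hasSum)
    simp [A, this]
  have hB : 0 < B := tsum_pos_of_tsum_pos hb hbs hab hA
  have htangent : ∀ i, a i * log (A / B) + (a i - b i * (A / B)) ≤ a i * log (a i / b i) :=
    fun i => mul_log_add_sub_le_mul_log_div (ha i) (hb i) (by positivity) (hab i)
  have hsum := Summable.tsum_le_tsum htangent
    ((has.mul_right _).add (has.sub (hbs.mul_right _))) hs
  rw [Summable.tsum_add (has.mul_right _) (has.sub (hbs.mul_right _)),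
    Summable.tsum_sub has (hbs.mul_right _), tsum_mul_right, tsum_mul_right,
    mul_div_cancel₀ _ hB.ne'] at hsum
  linarith

end LogSum

lemma antitoneOn_crossEntropy_sub_two_mul_sq {p : ℝ} (hp : p ≤ 1) :
    AntitoneOn (fun x => -(p * log x) - (1 - p) * log (1 - x) - 2 * (p - x) ^ 2) (Ioc 0 p) := by
  have hderiv : ∀ x ∈ Ioo 0 p, HasDerivAt
      (fun x => -(p * log x) - (1 - p) * log (1 - x) - 2 * (p - x) ^ 2)
      ((p - x) * (4 - 1 / (x * (1 - x)))) x := by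
    intro x ⟨hx0, hxp⟩
    have hx1 : 0 < 1 - x := by linarith
    refine ((((hasDerivAt_log hx0.ne').const_mul p).neg.sub
      ((((hasDerivAt_id x).const_sub 1).log hx1.ne').const_mul (1 - p))).sub
      ((((hasDerivAt_id x).const_sub p).pow 2).const_mul 2)).congr_deriv ?_
    simp only [id]
    field_simp
    ring
  refine antitoneOn_of_deriv_nonpos (convex_Ioc 0 p) ?_ ?_ ?_
  · rcases hp.lt_or_eq with hp | rfl
    · fun_prop (disch := grind)
    · simp only [sub_self, zero_mul, sub_zero]
      fun_prop (disch := grind)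
  · rw [interior_Ioc]
    exact fun x hx => (hderiv x hx).differentiableAt.differentiableWithinAt
  · rw [interior_Ioc]
    intro x hx
    rw [(hderiv x hx).deriv]
    have hx1 : 0 < x * (1 - x) := mul_pos hx.1 (by linarith [hx.2])
    have : 4 ≤ 1 / (x * (1 - x)) := by
      rw [le_div_iff₀ hx1]
      nlinarith [sq_nonneg (2 * x - 1)]
    exact mul_nonpos_of_nonneg_of_nonpos (by linarith [hx.2]) (by linarith)

theorem pinsker_bernoulli {p q : ℝ} (hq : 0 ≤ q) (hqp : q ≤ p) (hp : p ≤ 1)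
    (hpos : 0 < p → 0 < q) :
    2 * (p - q) ^ 2 ≤ p * log (p / q) + (1 - p) * log ((1 - p) / (1 - q)) := by
  rcases hqp.eq_or_lt with rfl | hlt
  · simp
  have hq : 0 < q := hpos (hq.trans_lt hlt)
  have hp0 : 0 < p := hq.trans hlt
  have hmono : -(p * log p) - (1 - p) * log (1 - p)
      ≤ -(p * log q) - (1 - p) * log (1 - q) - 2 * (p - q) ^ 2 := by
    simpa using antitoneOn_crossEntropy_sub_two_mul_sq hp ⟨hq, hlt.le⟩ ⟨hp0, le_rfl⟩ hlt.le
  have hlog_p : p * log (p / q) = p * (log p - log q) := by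
    rw [log_div hp0.ne' hq.ne']
  have hlog_one_sub_p :
      (1 - p) * log ((1 - p) / (1 - q)) = (1 - p) * (log (1 - p) - log (1 - q)) := by
    rcases hp.lt_or_eq with hp | rfl
    · rw [log_div (by linarith) (by linarith)]
    · simp
  rw [hlog_p, hlog_one_sub_p]
  linarith

section Partition

variable {Ω : Type*} {μ ν : Ω → ℝ}

lemma tsum_abs_sub_eq_two_mul_tsum_sub (hμs : Summable μ) (hνs : Summable ν)
    (hsum : ∑' i, μ i = ∑' i, ν i) :
    ∑' i, |μ i - ν i|
      = 2 * (∑' i : {i | ν i < μ i}, μ i - ∑' i : {i | ν i < μ i}, ν i) := by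
  set S : Set Ω := {i | ν i < μ i}
  have hdiff : Summable fun i => μ i - ν i := hμs.sub hνs
  have hsplit := (hdiff.subtype S).tsum_add_tsum_compl (s := S) (hdiff.subtype Sᶜ)
  rw [Summable.tsum_sub hμs hνs, hsum, sub_self] at hsplit
  have hS : ∑' i : S, |μ i - ν i| = ∑' i : S, (μ i - ν i) :=
    tsum_congr fun i => abs_of_pos (sub_pos.2 i.2)
  have hSc : ∑' i : ↥Sᶜ, |μ i - ν i| = -∑' i : ↥Sᶜ, (μ i - ν i) := by
    rw [← tsum_neg]
    exact tsum_congr fun i => abs_of_nonpos (sub_nonpos.2 (not_lt.1 i.2))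
  have hpq : ∑' i : S, (μ i - ν i) = ∑' i : S, μ i - ∑' i : S, ν i :=
    Summable.tsum_sub (hμs.subtype _) (hνs.subtype _)
  rw [← (hdiff.abs.subtype _).tsum_add_tsum_compl (s := S) (hdiff.abs.subtype _), hS, hSc]
  linarith

lemma mul_log_div_add_mul_log_div_compl_le (S : Set Ω) (hμ0 : ∀ i, 0 ≤ μ i)
    (hν0 : ∀ i, 0 ≤ ν i) (hμs : Summable μ) (hνs : Summable ν)
    (hac : ∀ i, ν i = 0 → μ i = 0)
    (hIsum : Summable fun i => μ i * log (μ i / ν i)) :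
    (∑' i : S, μ i) * log ((∑' i : S, μ i) / ∑' i : S, ν i)
      + (∑' i : ↥Sᶜ, μ i) * log ((∑' i : ↥Sᶜ, μ i) / ∑' i : ↥Sᶜ, ν i)
      ≤ ∑' i, μ i * log (μ i / ν i) := by
  rw [← (hIsum.subtype S).tsum_add_tsum_compl (s := S) (hIsum.subtype Sᶜ)]
  exact add_le_add
    (mul_log_div_le_tsum_mul_log_div (fun i => hμ0 i) (fun i => hν0 i) (hμs.subtype S)
      (hνs.subtype S) (fun i => hac i) (hIsum.subtype S))
    (mul_log_div_le_tsum_mul_log_div (fun i => hμ0 i) (fun i => hν0 i) (hμs.subtype Sᶜ)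
      (hνs.subtype Sᶜ) (fun i => hac i) (hIsum.subtype Sᶜ))

end Partition

theorem pinsker_inequality_general (Ω : Type*)
    (μ ν : Ω → ℝ) (hμ0 : ∀ i, 0 ≤ μ i) (hν0 : ∀ i, 0 ≤ ν i)
    (hμs : Summable μ) (hνs : Summable ν)
    (hμ1 : ∑' i, μ i = 1) (hν1 : ∑' i, ν i = 1)
    (hac : ∀ i, ν i = 0 → μ i = 0)
    (hIsum : Summable fun i => μ i * Real.log (μ i / ν i)) :
    2 * ((1 / 2) * ∑' i, |μ i - ν i|) ^ 2
      ≤ ∑' i, μ i * Real.log (μ i / ν i) := by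
  set S : Set Ω := {i | ν i < μ i}
  set p := ∑' i : S, μ i
  set q := ∑' i : S, ν i
  have hμSc : ∑' i : ↥Sᶜ, μ i = 1 - p := by
    rw [← hμ1, ← (hμs.subtype S).tsum_add_tsum_compl (s := S) (hμs.subtype Sᶜ),
      add_sub_cancel_left]
  have hνSc : ∑' i : ↥Sᶜ, ν i = 1 - q := by
    rw [← hν1, ← (hνs.subtype S).tsum_add_tsum_compl (s := S) (hνs.subtype Sᶜ),
      add_sub_cancel_left]
  have hTV : (1 / 2) * ∑' i, |μ i - ν i| = p - q := by
    rw [tsum_abs_sub_eq_two_mul_tsum_sub hμs hνs (hμ1.trans hν1.symm)]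
    ring
  have hKL := mul_log_div_add_mul_log_div_compl_le S hμ0 hν0 hμs hνs hac hIsum
  rw [hμSc, hνSc] at hKL
  have hqp : q ≤ p := (hνs.subtype S).tsum_le_tsum (fun i => i.2.le) (hμs.subtype S)
  have hp1 : p ≤ 1 := sub_nonneg.1 (hμSc ▸ tsum_nonneg fun i => hμ0 i)
  have hpos : 0 < p → 0 < q :=
    tsum_pos_of_tsum_pos (fun i => hν0 i) (hνs.subtype S) (fun i => hac i)
  rw [hTV]
  exact (pinsker_bernoulli (tsum_nonneg fun i : S => hν0 i) hqp hp1 hpos).trans hKL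

/-- Pinsker/Kullback inequality on a countable state space:
`2 d_TV(μ,ν)² ≤ d_I(μ,ν)`, where `d_I` is the relative entropy. -/
theorem pinsker_inequality (Ω : Type*) [Countable Ω]
    (μ ν : Ω → ℝ) (hμ0 : ∀ i, 0 ≤ μ i) (hν0 : ∀ i, 0 ≤ ν i)
    (hμs : Summable μ) (hνs : Summable ν)
    (hμ1 : ∑' i, μ i = 1) (hν1 : ∑' i, ν i = 1)
    (hac : ∀ i, ν i = 0 → μ i = 0)
    (hIsum : Summable fun i => μ i * Real.log (μ i / ν i)) :
    2 * ((1 / 2) * ∑' i, |μ i - ν i|) ^ 2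
      ≤ ∑' i, μ i * Real.log (μ i / ν i) :=
  pinsker_inequality_general Ω μ ν hμ0 hν0 hμs hνs hμ1 hν1 hac hIsum
end

section
/- For probability measures μ, ν on a countable space with ν everywhere positive, d_I(μ,ν) ≤ d_TV(μ,ν) + (1/2)·d_{χ²}(μ,ν). -/
lemma key_pointwise (a b : ℝ) (ha : 0 ≤ a) (hb : 0 < b) :
    a * Real.log (a / b) - (a - b) / 2 ≤ |a - b| / 2 + (a - b) ^ 2 / b / 2 := by
  rcases le_or_gt a b with hab | hab
  · have h1 : a * Real.log (a / b) ≤ 0 := by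
      apply mul_nonpos_of_nonneg_of_nonpos ha
      exact Real.log_nonpos (by positivity) ((div_le_one hb).mpr hab)
    rw [abs_of_nonpos (by linarith)]
    have h2 : 0 ≤ (a - b) ^ 2 / b / 2 := by positivity
    linarith
  · have ha' : 0 < a := hb.trans hab
    have ht : 1 ≤ a / b := (one_le_div hb).mpr hab.le
    have h1 : Real.log (a / b) ≤ (a / b - (a / b)⁻¹) / 2 := by
      rw [← Real.sinh_log (by positivity)]
      exact Real.self_le_sinh_iff.mpr (Real.log_nonneg ht)
    have h2 : a * Real.log (a / b) ≤ a * ((a / b - (a / b)⁻¹) / 2) :=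
      mul_le_mul_of_nonneg_left h1 ha
    have h3 : a * ((a / b - (a / b)⁻¹) / 2) = (a - b) + (a - b) ^ 2 / b / 2 := by
      field_simp
      ring
    rw [abs_of_pos (by linarith)]
    linarith

/-- On a countable space with `ν` everywhere positive,
`d_I(μ,ν) ≤ d_TV(μ,ν) + (1/2) d_χ²(μ,ν)`. -/
theorem relativeEntropy_le_totalVariation_add_half_chiSq (Ω : Type*) [Countable Ω]
    (μ ν : Ω → ℝ) (hμ0 : ∀ i, 0 ≤ μ i) (hν0 : ∀ i, 0 < ν i)
    (hμs : Summable μ) (hνs : Summable ν)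
    (hμ1 : ∑' i, μ i = 1) (hν1 : ∑' i, ν i = 1)
    (hIsum : Summable fun i => μ i * Real.log (μ i / ν i))
    (hχs : Summable fun i => (μ i - ν i) ^ 2 / ν i) :
    ∑' i, μ i * Real.log (μ i / ν i)
      ≤ (1 / 2) * (∑' i, |μ i - ν i|) + (1 / 2) * ∑' i, (μ i - ν i) ^ 2 / ν i := by
  have hsub : Summable (fun i => μ i - ν i) := hμs.sub hνs
  have hsub0 : ∑' i, (μ i - ν i) = 0 := by
    rw [Summable.tsum_sub hμs hνs, hμ1, hν1, sub_self]
  have habs : Summable (fun i => |μ i - ν i|) := hsub.abs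
  have hf : Summable (fun i => μ i * Real.log (μ i / ν i) - (μ i - ν i) / 2) := by
    simpa using hIsum.sub (hsub.div_const 2)
  have hg : Summable (fun i => |μ i - ν i| / 2 + (μ i - ν i) ^ 2 / ν i / 2) :=
    (habs.div_const 2).add (hχs.div_const 2)
  have hle : ∑' i, (μ i * Real.log (μ i / ν i) - (μ i - ν i) / 2)
      ≤ ∑' i, (|μ i - ν i| / 2 + (μ i - ν i) ^ 2 / ν i / 2) :=
    Summable.tsum_le_tsum (fun i => key_pointwise (μ i) (ν i) (hμ0 i) (hν0 i)) hf hg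
  rw [Summable.tsum_sub hIsum (hsub.div_const 2), tsum_div_const, hsub0,
    Summable.tsum_add (habs.div_const 2) (hχs.div_const 2), tsum_div_const, tsum_div_const] at hle
  linarith
end
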